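/- arXiv:1804.06643 — 5 statements merged into one kernel-verified Lean document; each statement's English description precedes it below -/
import Mathlib

section
/- If I is an m-primary ideal of R containing an element a with I² = aI and I = (a) :_R I, then setting A = I : I (the endomorphism ring in the total quotient ring), one has A = R : I and I = R : A; in particular R : (R : I) = I. -/
set_option synthInstance.maxHeartbeats 1000000
set_option maxHeartbeats 2000000
set_option linter.unnecessarySimpa false

open IsLocalRing Pointwise

section Defs
variable (R : Type*) [CommRing R]

/-- minimal number of generators of a submodule -/
noncomputable def mu {M : Type*} [AddCommGroup M] [Module R M] (N : Submodule R M) : ℕ :=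
  sInf {n | ∃ s : Finset M, s.card = n ∧ Submodule.span R (↑s : Set M) = N}

/-- length of a module, as the Krull dimension of its lattice of submodules -/
noncomputable def rlength (M : Type*) [AddCommGroup M] [Module R M] : WithBot ℕ∞ :=
  Order.krullDim (Submodule R M)

variable (K : Type*) [CommRing K] [Algebra R K]

/-- the image of an ideal in the total ring of fractions `K` -/
noncomputable def toK (I : Ideal R) : Submodule R K :=
  Submodule.map (Algebra.linearMap R K) I

/-- colon of submodules of the total quotient ring: `X : Y = {z | zY ⊆ X}` -/
def qcolon (X Y : Submodule R K) : Submodule R K where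
  carrier := {z | ∀ y ∈ Y, z * y ∈ X}
  add_mem' := by
    intro a b ha hb y hy
    simpa [add_mul] using X.add_mem (ha y hy) (hb y hy)
  zero_mem' := by
    intro y hy; simpa using X.zero_mem
  smul_mem' := by
    intro c a ha y hy
    simpa [smul_mul_assoc] using X.smul_mem c (ha y hy)

/-- `I : I`, viewed as a subalgebra (a birational extension of `R`) of the total
ring of fractions `K`. -/
noncomputable def endAlg (I : Ideal R) : Subalgebra R K where
  carrier := {z | ∀ y ∈ toK R K I, z * y ∈ toK R K I}
  mul_mem' := by
    intro a b ha hb y hy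
    rw [mul_assoc]; exact ha _ (hb y hy)
  add_mem' := by
    intro a b ha hb y hy
    simpa [add_mul] using (toK R K I).add_mem (ha y hy) (hb y hy)
  one_mem' := by intro y hy; simpa using hy
  zero_mem' := by intro y hy; simpa using (toK R K I).zero_mem
  algebraMap_mem' := by
    intro r y hy
    simpa [Algebra.smul_def] using (toK R K I).smul_mem r hy

/-- the socle `{x | m x = 0}` of a module over a local ring (`(⊥).jacobson` is
the maximal ideal of a local ring) -/
def socle (M : Type*) [AddCommGroup M] [Module R M] : Submodule R M where
  carrier := {x | ∀ c ∈ (⊥ : Ideal R).jacobson, c • x = 0}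
  add_mem' := by
    intro a b ha hb c hc; rw [smul_add, ha c hc, hb c hc, add_zero]
  zero_mem' := by intro c hc; simp
  smul_mem' := by
    intro r x hx c hc; rw [smul_comm, hx c hc, smul_zero]

/-- `R` has multiplicity `e`: the Hilbert function of the maximal ideal has
eventual first difference `e`.  (This is the multiplicity of a one-dimensional
Cohen-Macaulay local ring.) -/
noncomputable def HasMult (e : ℕ) : Prop :=
  ∀ᶠ n in Filter.atTop,
    rlength R (R ⧸ ((⊥ : Ideal R).jacobson ^ (n + 1))) =
      rlength R (R ⧸ ((⊥ : Ideal R).jacobson ^ n)) + (e : WithBot ℕ∞)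

/-- `R` has Cohen-Macaulay type `r`: for every parameter (a nonzerodivisor in
the maximal ideal), the socle of `R/(a)` has length `r`. -/
noncomputable def HasCMType (r : ℕ) : Prop :=
  ∀ a : R, a ∈ (⊥ : Ideal R).jacobson → a ∈ nonZeroDivisors R →
    rlength (R ⧸ Ideal.span {a}) (socle (R ⧸ Ideal.span {a}) (R ⧸ Ideal.span {a}))
      = (r : WithBot ℕ∞)

/-- an Artinian local ring is Gorenstein iff its socle is simple -/
noncomputable def IsArtinianGorensteinLocal : Prop :=
  IsArtinianRing R ∧ IsLocalRing R ∧ rlength R (socle R R) = (1 : WithBot ℕ∞)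

/-- a one-dimensional Cohen-Macaulay (Noetherian) local ring: local Noetherian
of Krull dimension one with positive depth -/
class IsOneDimCMLocal : Prop where
  noeth : IsNoetherianRing R
  local_ : IsLocalRing R
  dim_one : ringKrullDim R = 1
  depth_pos : ∃ a : R, a ∈ (⊥ : Ideal R).jacobson ∧ a ∈ nonZeroDivisors R

/-- Ulrich ideal: an `m`-primary ideal with a principal reduction `Q ⊊ I`,
`I² = QI`, and `I/I²` free over `R/I`. -/
def IsUlrich (I : Ideal R) : Prop :=
  I.radical = (⊥ : Ideal R).jacobson ∧ I ≠ ⊤ ∧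
  ∃ a ∈ I, Ideal.span {a} ≠ I ∧ I ^ 2 = Ideal.span {a} * I ∧
    Module.Free (R ⧸ I) I.Cotangent

/-- Condition (C) for an `m`-primary ideal `I`, with the number `t`:
`A/R ≅ (R/I)^t` with `t > 0` and `A = R : I`, where `A = I : I`. -/
def ConditionC (I : Ideal R) (t : ℕ) : Prop :=
  I.radical = (⊥ : Ideal R).jacobson ∧ I ≠ ⊤ ∧ 0 < t ∧
  Nonempty (((qcolon R K (toK R K I) (toK R K I)) ⧸
      (Submodule.comap (qcolon R K (toK R K I) (toK R K I)).subtype (toK R K (⊤ : Ideal R))))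
    ≃ₗ[R] (Fin t → R ⧸ I)) ∧
  qcolon R K (toK R K I) (toK R K I) = qcolon R K (toK R K (⊤ : Ideal R)) (toK R K I)

end Defs

/-!
As `I² ⊆ (a)` and `√I = m` contains a nonzerodivisor, `a` divides a power of a nonzerodivisor,
so it is a unit of `Q(R)`, and `I² = aI` gives `I : I = a⁻¹I`. If `zI ⊆ R` then `az ∈ R` and
`(az)I ⊆ aR`, so `az ∈ (a) :_R I = I`, i.e. `z ∈ a⁻¹I`; this is `I : I = R : I`. If `w(I : I) ⊆ R`
then `w ∈ R` (as `1 ∈ I : I`) and `w(a⁻¹I) ⊆ R`, so `w ∈ (a) :_R I = I`; this is `I = R : (I : I)`.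
-/

section NonZeroDivisor

variable {R : Type*} [CommRing R]

theorem mem_nonZeroDivisors_of_mem_radical_span_singleton {a b : R} (hb : b ∈ nonZeroDivisors R)
    (hab : b ∈ (Ideal.span {a}).radical) : a ∈ nonZeroDivisors R := by
  obtain ⟨n, hn⟩ := hab
  obtain ⟨c, hc⟩ := Ideal.mem_span_singleton'.mp hn
  exact (mul_mem_nonZeroDivisors.mp (hc ▸ pow_mem hb n)).2

theorem radical_le_radical_span_singleton_of_sq_le {I : Ideal R} {a : R}
    (hred : I ^ 2 ≤ Ideal.span {a} * I) : I.radical ≤ (Ideal.span {a}).radical :=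
  Ideal.radical_le_radical_iff.mpr fun _ hx =>
    ⟨2, Ideal.mul_le_left (hred (Ideal.pow_mem_pow hx 2))⟩

end NonZeroDivisor

section Colon

variable {R K : Type*} [CommRing R] [CommRing K] [Algebra R K]

theorem mem_toK {I : Ideal R} {z : K} : z ∈ toK R K I ↔ ∃ r ∈ I, algebraMap R K r = z := by
  simp [toK]

theorem toK_le_toK_top (I : Ideal R) : toK R K I ≤ toK R K ⊤ :=
  Submodule.map_mono le_top

theorem mem_colon_span_singleton_of_algebraMap_mul
    (hinj : Function.Injective (algebraMap R K)) {I : Ideal R} {a r : R}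
    (h : ∀ x ∈ I, ∃ s, algebraMap R K r * algebraMap R K x = algebraMap R K a * algebraMap R K s) :
    r ∈ Submodule.colon (Ideal.span {a}) I := by
  refine Submodule.mem_colon.mpr fun x hx => ?_
  obtain ⟨s, hs⟩ := h x hx
  rw [← map_mul, ← map_mul] at hs
  rw [smul_eq_mul, hinj hs]
  exact Ideal.mul_mem_right s _ (Ideal.mem_span_singleton_self a)

variable {I : Ideal R} {a : R}

theorem mem_qcolon_self_iff (ha : a ∈ I) (hu : IsUnit (algebraMap R K a))
    (hred : I ^ 2 ≤ Ideal.span {a} * I) {z : K} :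
    z ∈ qcolon R K (toK R K I) (toK R K I) ↔ algebraMap R K a * z ∈ toK R K I := by
  refine ⟨fun hz => ?_, fun hz y hy => ?_⟩
  · rw [mul_comm]
    exact hz _ (mem_toK.mpr ⟨a, ha, rfl⟩)
  obtain ⟨r, hr, hrz⟩ := mem_toK.mp hz
  obtain ⟨x, hx, rfl⟩ := mem_toK.mp hy
  obtain ⟨s, hs, hsa⟩ :=
    Ideal.mem_span_singleton_mul.mp (hred (sq I ▸ Ideal.mul_mem_mul hr hx))
  refine mem_toK.mpr ⟨s, hs, hu.mul_left_cancel ?_⟩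
  rw [← map_mul, hsa, map_mul, hrz, mul_assoc]

theorem qcolon_self_eq_qcolon_top (hinj : Function.Injective (algebraMap R K)) (ha : a ∈ I)
    (hu : IsUnit (algebraMap R K a)) (hred : I ^ 2 ≤ Ideal.span {a} * I)
    (hcol : Submodule.colon (Ideal.span {a}) I ≤ I) :
    qcolon R K (toK R K I) (toK R K I) = qcolon R K (toK R K ⊤) (toK R K I) := by
  refine le_antisymm (fun z hz y hy => toK_le_toK_top I (hz y hy)) fun z hz => ?_
  obtain ⟨r, -, hr⟩ := mem_toK.mp (mul_comm z _ ▸ hz _ (mem_toK.mpr ⟨a, ha, rfl⟩))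
  have hrI : r ∈ I := hcol <| mem_colon_span_singleton_of_algebraMap_mul hinj fun x hx => by
    obtain ⟨s, -, hs⟩ := mem_toK.mp (hz _ (mem_toK.mpr ⟨x, hx, rfl⟩))
    exact ⟨s, by rw [hr, mul_assoc, hs]⟩
  exact (mem_qcolon_self_iff ha hu hred).mpr (mem_toK.mpr ⟨r, hrI, hr⟩)

theorem toK_eq_qcolon_top_qcolon_self (hinj : Function.Injective (algebraMap R K)) (ha : a ∈ I)
    (hu : IsUnit (algebraMap R K a)) (hred : I ^ 2 ≤ Ideal.span {a} * I)
    (hcol : Submodule.colon (Ideal.span {a}) I ≤ I) :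
    toK R K I = qcolon R K (toK R K ⊤) (qcolon R K (toK R K I) (toK R K I)) := by
  refine le_antisymm (fun w hw z hz => mul_comm z w ▸ toK_le_toK_top I (hz w hw)) fun w hw => ?_
  have hone : (1 : K) ∈ qcolon R K (toK R K I) (toK R K I) := fun y hy => (one_mul y).symm ▸ hy
  obtain ⟨r, -, rfl⟩ := mem_toK.mp (mul_one w ▸ hw 1 hone)
  refine mem_toK.mpr ⟨r, hcol <| mem_colon_span_singleton_of_algebraMap_mul hinj fun x hx => ?_, rfl⟩
  have hcancel (y : K) : algebraMap R K a * (↑hu.unit⁻¹ * y) = y := by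
    rw [← mul_assoc, hu.mul_val_inv, one_mul]
  have hxa : ↑hu.unit⁻¹ * algebraMap R K x ∈ qcolon R K (toK R K I) (toK R K I) := by
    rw [mem_qcolon_self_iff ha hu hred, hcancel]
    exact mem_toK.mpr ⟨x, hx, rfl⟩
  obtain ⟨s, -, hs⟩ := mem_toK.mp (hw _ hxa)
  exact ⟨s, by rw [hs, mul_left_comm, hcancel]⟩

end Colon

theorem stmt0_general (R : Type*) [CommRing R] [IsOneDimCMLocal R]
    (K : Type*) [CommRing K] [Algebra R K] [IsFractionRing R K]
    (I : Ideal R) (hIm : I.radical = (⊥ : Ideal R).jacobson)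
    (a : R) (ha : a ∈ I) (hred : I ^ 2 = Ideal.span {a} * I)
    (hcol : I = Submodule.colon (Ideal.span {a} : Ideal R) I) :
    qcolon R K (toK R K I) (toK R K I) = qcolon R K (toK R K (⊤ : Ideal R)) (toK R K I) ∧
    toK R K I = qcolon R K (toK R K (⊤ : Ideal R)) (qcolon R K (toK R K I) (toK R K I)) ∧
    qcolon R K (toK R K (⊤ : Ideal R)) (qcolon R K (toK R K (⊤ : Ideal R)) (toK R K I)) = toK R K I := by
  obtain ⟨b, hbm, hb⟩ := IsOneDimCMLocal.depth_pos (R := R)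
  have hanz : a ∈ nonZeroDivisors R := mem_nonZeroDivisors_of_mem_radical_span_singleton hb <|
    radical_le_radical_span_singleton_of_sq_le hred.le (hIm ▸ hbm)
  have hu : IsUnit (algebraMap R K a) := IsLocalization.map_units K (⟨a, hanz⟩ : nonZeroDivisors R)
  have hinj := IsFractionRing.injective R K
  have hA := qcolon_self_eq_qcolon_top hinj ha hu hred.le hcol.ge
  have hI := toK_eq_qcolon_top_qcolon_self hinj ha hu hred.le hcol.ge
  exact ⟨hA, hI, hA ▸ hI.symm⟩

theorem stmt0 (R : Type*) [CommRing R] [IsOneDimCMLocal R]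
    (K : Type*) [CommRing K] [Algebra R K] [IsFractionRing R K]
    (I : Ideal R) (hIm : I.radical = (⊥ : Ideal R).jacobson) (hItop : I ≠ ⊤)
    (a : R) (ha : a ∈ I) (hred : I ^ 2 = Ideal.span {a} * I)
    (hcol : I = Submodule.colon (Ideal.span {a} : Ideal R) I) :
    qcolon R K (toK R K I) (toK R K I) = qcolon R K (toK R K (⊤ : Ideal R)) (toK R K I) ∧
    toK R K I = qcolon R K (toK R K (⊤ : Ideal R)) (qcolon R K (toK R K I) (toK R K I)) ∧
    qcolon R K (toK R K (⊤ : Ideal R)) (qcolon R K (toK R K (⊤ : Ideal R)) (toK R K I)) = toK R K I :=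
  stmt0_general R K I hIm a ha hred hcol
end

section
/- Let I be an m-primary ideal of R satisfying Condition (C) with A = I : I. Then for every a ∈ R, aA ∩ R ⊆ (a) + I. -/
set_option synthInstance.maxHeartbeats 1000000
set_option maxHeartbeats 2000000
set_option linter.unnecessarySimpa false

open IsLocalRing Pointwise

/-! Write an element of `aA ∩ R` as `aα` with `α ∈ A`. The class of `α` in `A/R ≅ (R/I)^t` is
killed by `a`, and in `(R/I)^t` such elements lie in `(I : a)(R/I)^t`; hence
`α ∈ (I : a)A + R` and `aα ∈ a(I : a)A + aR ⊆ IA + (a) ⊆ I + (a)`. -/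

section Modules

variable {R : Type*} [CommRing R] {I : Ideal R} {a : R}

theorem Ideal.mem_colon_smul_top_of_smul_eq_zero {ι : Type*} [Finite ι] {v : ι → R ⧸ I}
    (hv : a • v = 0) : v ∈ I.colon (Ideal.span {a}) • (⊤ : Submodule R (ι → R ⧸ I)) := by
  classical
  cases nonempty_fintype ι
  choose c hc using fun i ↦ Ideal.Quotient.mk_surjective (v i)
  have hv_sum : v = ∑ i, c i • Pi.single i (1 : R ⧸ I) := by
    conv_lhs => rw [← Finset.univ_sum_single v]
    refine Finset.sum_congr rfl fun i _ ↦ ?_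
    rw [← Pi.single_smul, ← hc i, Algebra.smul_def, mul_one, Ideal.Quotient.algebraMap_eq]
  rw [hv_sum]
  refine Submodule.sum_mem _ fun i _ ↦ Submodule.smul_mem_smul ?_ trivial
  have hi : a • v i = 0 := congrFun hv i
  rw [← hc i, Algebra.smul_def, Ideal.Quotient.algebraMap_eq, ← map_mul,
    Ideal.Quotient.eq_zero_iff_mem] at hi
  rwa [Ideal.mem_colon_span_singleton, mul_comm]

variable {M : Type*} [AddCommGroup M] [Module R M]

theorem Ideal.mem_colon_smul_top_of_linearEquiv {ι : Type*} [Finite ι]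
    (e : M ≃ₗ[R] (ι → R ⧸ I)) {x : M} (hx : a • x = 0) :
    x ∈ I.colon (Ideal.span {a}) • (⊤ : Submodule R M) := by
  have he : e x ∈ I.colon (Ideal.span {a}) • (⊤ : Submodule R (ι → R ⧸ I)) :=
    Ideal.mem_colon_smul_top_of_smul_eq_zero (by rw [← map_smul, hx, map_zero])
  have hmap := Submodule.mem_map_of_mem (f := (e.symm : (ι → R ⧸ I) →ₗ[R] M)) he
  rwa [Submodule.map_smul'', Submodule.map_top, LinearEquiv.range, LinearEquiv.coe_coe,
    LinearEquiv.symm_apply_apply] at hmap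

theorem Submodule.mem_smul_top_sup_of_mkQ_mem {J : Ideal R} {N : Submodule R M} {x : M}
    (hx : N.mkQ x ∈ J • (⊤ : Submodule R (M ⧸ N))) : x ∈ J • ⊤ ⊔ N := by
  rwa [← range_mkQ N, ← map_top, ← map_smul'', ← mem_comap, comap_map_mkQ, sup_comm] at hx

theorem Submodule.mem_colon_smul_sup_of_smul_mem {ι : Type*} [Finite ι] {N P : Submodule R M}
    (e : (N ⧸ P.comap N.subtype) ≃ₗ[R] (ι → R ⧸ I)) {x : M} (hxN : x ∈ N) (hxP : a • x ∈ P) :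
    x ∈ I.colon (Ideal.span {a}) • N ⊔ P := by
  have hq := Ideal.mem_colon_smul_top_of_linearEquiv e (x := Submodule.Quotient.mk ⟨x, hxN⟩)
    (by rw [← Submodule.Quotient.mk_smul, Submodule.Quotient.mk_eq_zero]; exact hxP)
  have hlift := mem_map_of_mem (f := N.subtype) (mem_smul_top_sup_of_mkQ_mem hq)
  rw [map_sup, map_smul'', map_subtype_top] at hlift
  exact sup_le_sup_left (map_comap_le N.subtype P) _ hlift

end Modules

section FractionRing

variable {R : Type*} [CommRing R] {K : Type*} [CommRing K] [Algebra R K]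

theorem smul_mem_of_mem_colon_smul_qcolon {I : Ideal R} {a : R} {X : Submodule R K} {y : K}
    (hy : y ∈ I.colon (Ideal.span {a}) • qcolon R K X (toK R K I)) : a • y ∈ X := by
  refine Submodule.smul_induction_on hy (fun r hr n hn ↦ ?_) fun y z hy hz ↦ ?_
  · have har : a * r ∈ I := by rwa [Ideal.mem_colon_span_singleton, mul_comm] at hr
    convert hn _ ⟨a * r, har, rfl⟩ using 1
    rw [Algebra.linearMap_apply, smul_smul, Algebra.smul_def, mul_comm]
  · rw [smul_add]; exact X.add_mem hy hz

theorem smul_algebraMap_mem_toK_span_singleton (a s : R) :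
    a • algebraMap R K s ∈ toK R K (Ideal.span {a}) :=
  ⟨a * s, Ideal.mul_mem_right s _ (Ideal.mem_span_singleton_self a), by
    rw [Algebra.linearMap_apply, map_mul, Algebra.smul_def]⟩

end FractionRing

theorem stmt2_general (R : Type*) [CommRing R]
    (K : Type*) [CommRing K] [Algebra R K]
    (I : Ideal R) (t : ℕ) (hC : ConditionC R K I t) (a : R) :
    (a • qcolon R K (toK R K I) (toK R K I)) ⊓ toK R K (⊤ : Ideal R) ≤
      toK R K (Ideal.span {a} ⊔ I) := by
  obtain ⟨-, -, -, ⟨e⟩, -⟩ := hC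
  rintro _ ⟨⟨α, hα, rfl⟩, haα⟩
  obtain ⟨y, hy, _, ⟨s, -, rfl⟩, rfl⟩ :=
    Submodule.mem_sup.mp (Submodule.mem_colon_smul_sup_of_smul_mem e hα haα)
  change a • (y + algebraMap R K s) ∈ _
  rw [toK, Submodule.map_sup, smul_add, add_comm]
  exact Submodule.add_mem_sup (smul_algebraMap_mem_toK_span_singleton a s)
    (smul_mem_of_mem_colon_smul_qcolon hy)

theorem stmt2 (R : Type*) [CommRing R] [IsOneDimCMLocal R]
    (K : Type*) [CommRing K] [Algebra R K] [IsFractionRing R K]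
    (I : Ideal R) (t : ℕ) (hC : ConditionC R K I t) (a : R) :
    (a • qcolon R K (toK R K I) (toK R K I)) ⊓ toK R K (⊤ : Ideal R) ≤
      toK R K (Ideal.span {a} ⊔ I) :=
  stmt2_general R K I t hC a
end

section
/- With I satisfying Condition (C), J m-primary with J² = bJ, J = (b) :_R J, and I ⊊ J: (1) b⁻¹I ∩ R = I :_R J; (2) ℓ_R((I :_R J)/I) = ℓ_R(R/J); (3) I = (b·(I :_R J))A. -/
set_option synthInstance.maxHeartbeats 1000000
set_option maxHeartbeats 2000000
set_option linter.unnecessarySimpa false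

open IsLocalRing Pointwise

/-!
Since `J² = bJ` and `J` contains a nonzerodivisor, `b` is a nonzerodivisor. For `x ∈ J` the
fraction `x/b` lies in `R : I = A`, and `b` kills its class in `A/R ≅ (R/I)^t`, so the coordinates
of that class lie in `(I :_R b)/I` and `x/b ∈ R + (I :_R b)A`. Multiplying by `b` and using
`b(I :_R b) ⊆ I = IA` gives `J ⊆ (b) + b(I :_R b)A ⊆ (b) + I`, hence `J = I + (b)` and
`I :_R J = I :_R b`. Then (1) is the definition of `I :_R b`, (2) follows from the exact sequence
`0 → (I :_R b)/I → R/I --b--> R/I → R/(I + (b)) → 0` of modules of finite length, and (3)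
from intersecting `I ⊆ (b) + b(I :_R b)A` with `I` by the modular law, as
`I ∩ (b) = b(I :_R b)`.
-/

open nonZeroDivisors IsLocalization

section

variable {R : Type*} [CommRing R]

theorem rlength_eq_length (M : Type*) [AddCommGroup M] [Module R M] :
    rlength R M = Module.length R M :=
  (Module.coe_length R M).symm

theorem Module.length_eq_of_exact_endo {N M P : Type*} [AddCommGroup N] [Module R N]
    [AddCommGroup M] [Module R M] [AddCommGroup P] [Module R P]
    {i : N →ₗ[R] M} {f : M →ₗ[R] M} {p : M →ₗ[R] P} (hi : Function.Injective i)
    (hp : Function.Surjective p) (hif : Function.Exact i f) (hfp : Function.Exact f p)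
    (hM : Module.length R M ≠ ⊤) :
    Module.length R N = Module.length R P := by
  have hker : Module.length R M = Module.length R N + Module.length R (LinearMap.range f) :=
    Module.length_eq_add_of_exact i f.rangeRestrict hi f.surjective_rangeRestrict
      fun y => by
        rw [← hif y, ← LinearMap.mem_ker, LinearMap.ker_rangeRestrict, LinearMap.mem_ker]
  have hcoker : Module.length R M = Module.length R (LinearMap.range f) + Module.length R P :=
    Module.length_eq_add_of_exact _ p (LinearMap.range f).injective_subtype hp
      fun y => by rw [hfp y]; simp
  have hrange : Module.length R (LinearMap.range f) ≠ ⊤ :=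
    ne_top_of_le_ne_top hM (hcoker ▸ le_self_add)
  rw [hker, add_comm] at hcoker
  exact WithTop.add_left_cancel hrange hcoker

theorem length_quotient_ne_top_of_radical_eq [IsNoetherianRing R] [IsLocalRing R]
    {I : Ideal R} (hI : I.radical = maximalIdeal R) : Module.length R (R ⧸ I) ≠ ⊤ := by
  have : IsArtinianRing (R ⧸ I) :=
    IsLocalRing.quotient_artinian_of_mem_minimalPrimes_of_isLocalRing I <| by
      rw [← Ideal.radical_minimalPrimes, hI, Ideal.minimalPrimes_eq_subsingleton_self]; rfl
  have : IsArtinian R (R ⧸ I) :=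
    isArtinian_of_surjective_algebraMap (Ideal.Quotient.mk_surjective (I := I))
  exact Module.length_ne_top

theorem Ideal.colon_sup_self (I L : Ideal R) : I.colon ↑(I ⊔ L) = I.colon ↑L := by
  have : I ⊔ L = Ideal.span (↑I ∪ ↑L) := by
    rw [Ideal.span_union, Ideal.span_eq, Ideal.span_eq]
  rw [this, Ideal.colon_span, Submodule.colon_union,
    (Submodule.colon_eq_top_iff_subset _).mpr le_rfl, top_inf_eq]

theorem Ideal.inf_span_singleton_eq_mul_colon (I : Ideal R) (b : R) :
    I ⊓ Ideal.span {b} = Ideal.span {b} * I.colon (Ideal.span {b}) := by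
  ext x
  simp only [Ideal.mem_inf, Ideal.mem_span_singleton_mul, Ideal.mem_colon_span_singleton,
    Ideal.mem_span_singleton']
  constructor
  · rintro ⟨hx, s, rfl⟩
    exact ⟨s, hx, mul_comm _ _⟩
  · rintro ⟨s, hs, rfl⟩
    exact ⟨by rwa [mul_comm], s, mul_comm _ _⟩

theorem Ideal.length_colon_quotient_eq_length_quotient_sup (I : Ideal R) (b : R)
    (hI : Module.length R (R ⧸ I) ≠ ⊤) :
    Module.length R (I.colon (Ideal.span {b}) ⧸
        Submodule.comap (I.colon (Ideal.span {b})).subtype I) =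
      Module.length R (R ⧸ (I ⊔ Ideal.span {b})) := by
  set C := I.colon (Ideal.span {b})
  refine Module.length_eq_of_exact_endo (f := LinearMap.lsmul R (R ⧸ I) b)
    (i := (Submodule.comap C.subtype I).mapQ I C.subtype le_rfl)
    (p := I.mapQ (I ⊔ Ideal.span {b}) LinearMap.id le_sup_left) ?_ ?_ ?_ ?_ hI
  · rw [← LinearMap.ker_eq_bot, Submodule.ker_mapQ, Submodule.mkQ_map_self]
  · rintro ⟨x⟩
    exact ⟨Submodule.Quotient.mk x, rfl⟩
  · rintro ⟨x⟩
    have hIC : I ≤ C := Ideal.le_colon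
    change Submodule.Quotient.mk (b • x) = (0 : R ⧸ I) ↔ _
    rw [Submodule.Quotient.mk_eq_zero, smul_eq_mul, mul_comm, ← Ideal.mem_colon_span_singleton]
    constructor
    · intro hx
      exact ⟨Submodule.Quotient.mk ⟨x, hx⟩, rfl⟩
    · rintro ⟨⟨c⟩, hc⟩
      have hcx : (c : R) - x ∈ I := (Submodule.Quotient.eq I).mp hc
      simpa only [sub_sub_cancel] using C.sub_mem c.2 (hIC hcx)
  · rintro ⟨x⟩
    change Submodule.Quotient.mk x = (0 : R ⧸ (I ⊔ Ideal.span {b})) ↔ _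
    rw [Submodule.Quotient.mk_eq_zero, Submodule.mem_sup]
    constructor
    · rintro ⟨y, hy, z, hz, rfl⟩
      obtain ⟨s, rfl⟩ := Ideal.mem_span_singleton'.mp hz
      refine ⟨Submodule.Quotient.mk s, (Submodule.Quotient.eq I).mpr ?_⟩
      simpa [mul_comm] using I.neg_mem hy
    · rintro ⟨⟨r⟩, hr⟩
      have hrx : b * r - x ∈ I := (Submodule.Quotient.eq I).mp hr
      refine ⟨x - b * r, by simpa using I.neg_mem hrx, b * r,
        Ideal.mul_mem_right r _ (Ideal.mem_span_singleton_self b), sub_add_cancel x _⟩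

theorem mem_nonZeroDivisors_of_sq_le_span_singleton {J : Ideal R} {a b : R} (ha : a ∈ R⁰)
    (haJ : a ∈ J.radical) (hJ : J ^ 2 ≤ Ideal.span {b}) : b ∈ R⁰ := by
  obtain ⟨k, hk⟩ := haJ
  obtain ⟨s, hs⟩ := Ideal.mem_span_singleton'.mp (hJ (pow_two J ▸ Ideal.mul_mem_mul hk hk))
  have : s * b ∈ R⁰ := hs ▸ mul_mem (pow_mem ha k) (pow_mem ha k)
  exact (mul_mem_nonZeroDivisors.mp this).2

theorem mem_colon_smul_top_of_smul_eq_zero {ι : Type*} [Fintype ι] (I : Ideal R) {b : R}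
    {w : ι → R ⧸ I} (hw : b • w = 0) :
    w ∈ I.colon (Ideal.span {b}) • (⊤ : Submodule R (ι → R ⧸ I)) := by
  classical
  rw [← Finset.univ_sum_single w]
  refine Submodule.sum_mem _ fun i _ => ?_
  obtain ⟨c, hc⟩ := Ideal.Quotient.mk_surjective (w i)
  have hbc : c * b ∈ I := by
    rw [mul_comm, ← Ideal.Quotient.eq_zero_iff_mem, map_mul, hc]
    exact congrFun hw i
  rw [← hc, ← Ideal.Quotient.algebraMap_eq, Algebra.algebraMap_eq_smul_one, Pi.single_smul]
  exact Submodule.smul_mem_smul (Ideal.mem_colon_span_singleton.mpr hbc) trivial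

theorem mem_sup_colon_smul_of_smul_mem {ι : Type*} [Fintype ι] {Q : Type*} [AddCommGroup Q]
    [Module R Q] {I : Ideal R} {N A : Submodule R Q}
    (φ : (A ⧸ N.comap A.subtype) ≃ₗ[R] (ι → R ⧸ I)) {b : R} {z : Q} (hz : z ∈ A)
    (hbz : b • z ∈ N) : z ∈ N ⊔ I.colon (Ideal.span {b}) • A := by
  set C := I.colon (Ideal.span {b})
  set N' := N.comap A.subtype
  have hφ : φ (N'.mkQ ⟨z, hz⟩) ∈ C • (⊤ : Submodule R (ι → R ⧸ I)) := by
    refine mem_colon_smul_top_of_smul_eq_zero I ?_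
    have hbz' : b • (⟨z, hz⟩ : A) ∈ N' := hbz
    rw [← map_smul, ← map_smul, Submodule.mkQ_apply,
      (Submodule.Quotient.mk_eq_zero _).mpr hbz', map_zero]
  have hmk : N'.mkQ ⟨z, hz⟩ ∈ (C • ⊤ : Submodule R A).map N'.mkQ := by
    rw [Submodule.map_smul'', Submodule.map_top, Submodule.range_mkQ,
      ← φ.symm_apply_apply (N'.mkQ _)]
    simpa only [Submodule.map_smul'', Submodule.map_top, LinearEquiv.range, LinearEquiv.coe_coe]
      using Submodule.mem_map_of_mem (f := (φ.symm : (ι → R ⧸ I) →ₗ[R] A ⧸ N')) hφ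
  rw [← Submodule.mem_comap, Submodule.comap_map_mkQ] at hmk
  have := Submodule.mem_map_of_mem (f := A.subtype) hmk
  rw [Submodule.map_sup, Submodule.map_comap_subtype, Submodule.map_smul'',
    Submodule.map_subtype_top] at this
  exact (sup_le_sup_right (inf_le_right : A ⊓ N ≤ N) _ : _ ≤ N ⊔ C • A) this

variable {K : Type*} [CommRing K] [Algebra R K]

theorem toK_eq_coeSubmodule (I : Ideal R) : toK R K I = coeSubmodule K I := rfl

theorem qcolon_eq_div (X Y : Submodule R K) : qcolon R K X Y = X / Y := by
  ext
  exact Submodule.mem_div_iff_forall_mul_mem.symm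

theorem coeSubmodule_span_singleton_mul_colon_mul_le {I : Ideal R} {A : Submodule R K}
    (hA : A = coeSubmodule K I / coeSubmodule K I) (b : R) :
    coeSubmodule K (Ideal.span {b} * I.colon (Ideal.span {b})) * A ≤ coeSubmodule K I := by
  have hIA : coeSubmodule K I * A ≤ coeSubmodule K I := by
    rw [mul_comm, ← Submodule.le_div_iff_mul_le, hA]
  refine (mul_le_mul_left (coeSubmodule_mono K ?_) A).trans hIA
  exact Ideal.inf_span_singleton_eq_mul_colon I b ▸ inf_le_left

variable [IsFractionRing R K]

theorem algebraMap_mem_coeSubmodule_iff {I : Ideal R} {x : R} :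
    algebraMap R K x ∈ coeSubmodule K I ↔ x ∈ I :=
  ⟨fun ⟨_, hy, hyx⟩ => IsFractionRing.injective R K hyx ▸ hy, fun hx => ⟨x, hx, rfl⟩⟩

theorem coeSubmodule_inf (I L : Ideal R) :
    coeSubmodule K (I ⊓ L) = coeSubmodule K I ⊓ coeSubmodule K L :=
  Submodule.map_inf _ (IsFractionRing.injective R K)

theorem coeSubmodule_div_inf_one (I L : Ideal R) :
    coeSubmodule K I / coeSubmodule K L ⊓ 1 = coeSubmodule K (I.colon L) := by
  ext x
  constructor
  · rintro ⟨hx, hx1⟩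
    obtain ⟨r, rfl⟩ := Submodule.mem_one.mp hx1
    refine ⟨r, Submodule.mem_colon.mpr fun l hl => ?_, rfl⟩
    rw [← algebraMap_mem_coeSubmodule_iff (K := K), smul_eq_mul, map_mul]
    exact Submodule.mem_div_iff_forall_mul_mem.mp hx _ ⟨l, hl, rfl⟩
  · rintro ⟨r, hr, rfl⟩
    refine ⟨Submodule.mem_div_iff_forall_mul_mem.mpr ?_, Submodule.mem_one.mpr ⟨r, rfl⟩⟩
    rintro _ ⟨l, hl, rfl⟩
    rw [Algebra.linearMap_apply, Algebra.linearMap_apply, ← map_mul]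
    exact ⟨_, Submodule.mem_colon.mp hr l hl, rfl⟩

theorem mk'_mem_one_div_of_mul_le_span_singleton {I J : Ideal R} {b : R} (hb : b ∈ R⁰)
    (hJI : J * I ≤ Ideal.span {b}) {x : R} (hx : x ∈ J) :
    mk' K x ⟨b, hb⟩ ∈ 1 / coeSubmodule K I := by
  rw [Submodule.mem_div_iff_forall_mul_mem]
  rintro _ ⟨i, hi, rfl⟩
  obtain ⟨s, hs⟩ := Ideal.mem_span_singleton'.mp (hJI (Ideal.mul_mem_mul hx hi))
  rw [Algebra.linearMap_apply, mul_comm, mul_mk'_eq_mk'_of_mul, mul_comm i, ← hs, mul_comm s]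
  exact Submodule.mem_one.mpr ⟨s, (mk'_mul_cancel_left s ⟨b, hb⟩).symm⟩

theorem coeSubmodule_le_span_sup_colon_mul {ι : Type*} [Fintype ι] {I J : Ideal R}
    {A : Submodule R K}
    (φ : (A ⧸ (coeSubmodule K ⊤).comap A.subtype) ≃ₗ[R] (ι → R ⧸ I))
    (hA : A = 1 / coeSubmodule K I) {b : R} (hb : b ∈ R⁰) (hJI : J * I ≤ Ideal.span {b}) :
    coeSubmodule K J ≤ coeSubmodule K (Ideal.span {b}) ⊔
      coeSubmodule K (Ideal.span {b} * I.colon (Ideal.span {b})) * A := by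
  rintro _ ⟨x, hx, rfl⟩
  have hbz : b • mk' K x ⟨b, hb⟩ = algebraMap R K x := by
    rw [Algebra.smul_def]; exact mk'_spec' K x ⟨b, hb⟩
  obtain ⟨_, ⟨r, -, rfl⟩, y, hy, hxy⟩ := Submodule.mem_sup.mp <|
    mem_sup_colon_smul_of_smul_mem φ (hA ▸ mk'_mem_one_div_of_mul_le_span_singleton hb hJI hx)
      (by rw [hbz]; exact ⟨x, trivial, rfl⟩)
  rw [Algebra.linearMap_apply, ← hbz, ← hxy, smul_add]
  refine Submodule.add_mem_sup
    ⟨b * r, Ideal.mul_mem_right r _ (Ideal.mem_span_singleton_self b), ?_⟩ ?_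
  · rw [Algebra.linearMap_apply, map_mul, Algebra.smul_def, Algebra.linearMap_apply]
  · rw [coeSubmodule_mul, mul_assoc, Algebra.smul_def]
    refine Submodule.mul_mem_mul ⟨b, Ideal.mem_span_singleton_self b, rfl⟩ ?_
    refine (Submodule.smul_le.mpr fun c hc a ha => ?_) hy
    rw [Algebra.smul_def]
    exact Submodule.mul_mem_mul ⟨c, hc, rfl⟩ ha

theorem eq_sup_span_singleton_of_mul_le_span_singleton {ι : Type*} [Fintype ι]
    {I J : Ideal R} {A : Submodule R K}
    (φ : (A ⧸ (coeSubmodule K ⊤).comap A.subtype) ≃ₗ[R] (ι → R ⧸ I))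
    (hA : A = 1 / coeSubmodule K I) (hAI : A = coeSubmodule K I / coeSubmodule K I) {b : R}
    (hb : b ∈ R⁰) (hJI : J * I ≤ Ideal.span {b}) (hIJ : I ≤ J) (hbJ : b ∈ J) :
    J = I ⊔ Ideal.span {b} := by
  refine le_antisymm ?_ (sup_le hIJ ((Ideal.span_singleton_le_iff_mem J).mpr hbJ))
  rw [← IsFractionRing.coeSubmodule_le_coeSubmodule (K := K), coeSubmodule_sup]
  exact (coeSubmodule_le_span_sup_colon_mul φ hA hb hJI).trans
    (sup_le le_sup_right
      ((coeSubmodule_span_singleton_mul_colon_mul_le hAI b).trans le_sup_left))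

theorem coeSubmodule_eq_span_singleton_mul_colon_mul {ι : Type*} [Fintype ι]
    {I J : Ideal R} {A : Submodule R K}
    (φ : (A ⧸ (coeSubmodule K ⊤).comap A.subtype) ≃ₗ[R] (ι → R ⧸ I))
    (hA : A = 1 / coeSubmodule K I) (hAI : A = coeSubmodule K I / coeSubmodule K I) {b : R}
    (hb : b ∈ R⁰) (hJI : J * I ≤ Ideal.span {b}) (hIJ : I ≤ J) :
    coeSubmodule K I = coeSubmodule K (Ideal.span {b} * I.colon (Ideal.span {b})) * A := by
  set X := coeSubmodule K (Ideal.span {b} * I.colon (Ideal.span {b})) * A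
  have hXI : X ≤ coeSubmodule K I := coeSubmodule_span_singleton_mul_colon_mul_le hAI b
  have h1A : 1 ≤ A := Submodule.one_le.mpr (hAI ▸ Submodule.one_mem_div.mpr le_rfl)
  refine le_antisymm ?_ hXI
  calc coeSubmodule K I ≤ coeSubmodule K I ⊓ (coeSubmodule K (Ideal.span {b}) ⊔ X) :=
        le_inf le_rfl
          ((coeSubmodule_mono K hIJ).trans (coeSubmodule_le_span_sup_colon_mul φ hA hb hJI))
    _ = coeSubmodule K (I ⊓ Ideal.span {b}) ⊔ X := by
        rw [inf_comm, sup_comm, sup_inf_assoc_of_le _ hXI, sup_comm, inf_comm, coeSubmodule_inf]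
    _ ≤ X := by
        rw [Ideal.inf_span_singleton_eq_mul_colon]
        exact sup_le ((mul_one _).symm.le.trans (mul_le_mul_right h1A _)) le_rfl

end

theorem stmt5_general (R : Type*) [CommRing R] [IsOneDimCMLocal R]
    (K : Type*) [CommRing K] [Algebra R K] [IsFractionRing R K]
    (I : Ideal R) (t : ℕ) (hC : ConditionC R K I t)
    (J : Ideal R) (hJm : J.radical = (⊥ : Ideal R).jacobson)
    (b : R) (hb : b ∈ J) (hred : J ^ 2 = Ideal.span {b} * J)
    (hIJ : I < J) :
    qcolon R K (toK R K I) (toK R K (Ideal.span {b})) ⊓ toK R K (⊤ : Ideal R) =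
      toK R K (Submodule.colon I J) ∧
    rlength R (↥(Submodule.colon I J) ⧸
        Submodule.comap (Submodule.colon I J : Ideal R).subtype I) =
      rlength R (R ⧸ J) ∧
    toK R K I = toK R K (Ideal.span {b} * Submodule.colon I J) *
      qcolon R K (toK R K I) (toK R K I) := by
  have := IsOneDimCMLocal.noeth (R := R)
  have := IsOneDimCMLocal.local_ (R := R)
  obtain ⟨a, ham, ha⟩ := IsOneDimCMLocal.depth_pos (R := R)
  obtain ⟨hIrad, -, -, ⟨φ⟩, hAR⟩ := hC
  rw [jacobson_eq_maximalIdeal ⊥ bot_ne_top] at hIrad hJm ham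
  have hbreg : b ∈ R⁰ :=
    mem_nonZeroDivisors_of_sq_le_span_singleton ha (hJm ▸ ham) (hred ▸ Ideal.mul_le_left)
  have hJI : J * I ≤ Ideal.span {b} :=
    (Ideal.mul_mono_right hIJ.le).trans (pow_two J ▸ hred ▸ Ideal.mul_le_left)
  have hA : qcolon R K (toK R K I) (toK R K I) = 1 / coeSubmodule K I := by
    rw [hAR, qcolon_eq_div, toK_eq_coeSubmodule, toK_eq_coeSubmodule, coeSubmodule_top]
  have hJ := eq_sup_span_singleton_of_mul_le_span_singleton φ hA (qcolon_eq_div _ _) hbreg hJI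
    hIJ.le hb
  have hcolon : I.colon J = I.colon (Ideal.span {b}) := by rw [hJ, Ideal.colon_sup_self]
  refine ⟨?_, ?_, ?_⟩
  · simp only [qcolon_eq_div, toK_eq_coeSubmodule, coeSubmodule_top]
    rw [coeSubmodule_div_inf_one, hcolon]
  · rw [rlength_eq_length, rlength_eq_length, hcolon, hJ]
    exact_mod_cast Ideal.length_colon_quotient_eq_length_quotient_sup I b
      (length_quotient_ne_top_of_radical_eq hIrad)
  · rw [hcolon]
    exact coeSubmodule_eq_span_singleton_mul_colon_mul φ hA (qcolon_eq_div _ _) hbreg hJI hIJ.le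

theorem stmt5 (R : Type*) [CommRing R] [IsOneDimCMLocal R]
    (K : Type*) [CommRing K] [Algebra R K] [IsFractionRing R K]
    (I : Ideal R) (t : ℕ) (hC : ConditionC R K I t)
    (J : Ideal R) (hJm : J.radical = (⊥ : Ideal R).jacobson) (hJtop : J ≠ ⊤)
    (b : R) (hb : b ∈ J) (hred : J ^ 2 = Ideal.span {b} * J)
    (hcol : J = Submodule.colon (Ideal.span {b} : Ideal R) J)
    (hIJ : I < J) :
    qcolon R K (toK R K I) (toK R K (Ideal.span {b})) ⊓ toK R K (⊤ : Ideal R) =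
      toK R K (Submodule.colon I J) ∧
    rlength R (↥(Submodule.colon I J) ⧸
        Submodule.comap (Submodule.colon I J : Ideal R).subtype I) =
      rlength R (R ⧸ J) ∧
    toK R K I = toK R K (Ideal.span {b} * Submodule.colon I J) *
      qcolon R K (toK R K I) (toK R K I) :=
  stmt5_general R K I t hC J hJm b hb hred hIJ
end

section
/- Let I be an Ulrich ideal of R with A = I : I, and let a₁, …, aₙ ∈ m (n ≥ 2) with I = a₁a₂⋯aₙA. Setting I_i = (a₁⋯a_i) + I for 1 ≤ i ≤ n, each I_i is an Ulrich ideal of R, and I = I_n ⊊ I_{n−1} ⊊ ⋯ ⊊ I₁. -/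
set_option synthInstance.maxHeartbeats 1000000
set_option maxHeartbeats 2000000
set_option linter.unnecessarySimpa false

open IsLocalRing Pointwise

/-!
Write `f = a₁⋯aₙ`. From `I = fA` with `A = I : I`: `I² = fI`, and since `I` is an `A`-module,
`f ∈ JI` would give `I ⊆ JI`, impossible for a proper ideal `J` by Nakayama. Hence `f ∉ mI`,
and in `f = bc` with `b = a₁⋯aᵢ` we have `c ∉ I` and, for `i < n`, `b ∉ I`; the latter makes
the chain strict.

As `I/I²` is free and `f ∉ mI`, it has a basis `[f], [x₂], …, [x_r]`. For `J = (b) + I` one gets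
`J² = bJ` from `I² = fI ⊆ bJ`, and `[b], [x₂], …, [x_r]` is a basis of `J/J²`: a relation among
them, multiplied by `c`, becomes one among `f, x₂, …, x_r`, whose coefficients lie in `I`, and
`ct ∈ I` forces `t ∈ J`.
-/

open Ideal

lemma dotProduct_update {R κ : Type*} [Ring R] [Fintype κ] [DecidableEq κ]
    (v w : κ → R) (k : κ) (a : R) :
    v ⬝ᵥ Function.update w k a = v ⬝ᵥ w + v k * (a - w k) := by
  have : Function.update w k a = w + Pi.single k (a - w k) := by
    ext j; by_cases h : j = k <;> simp [h]
  rw [this, dotProduct_add, dotProduct_single]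

namespace Ideal

variable {R : Type*} [CommRing R] {κ : Type*} [Fintype κ]

/-- The family `x` in `I` lifts a basis of the `R ⧸ I`-module `I / I²`. -/
structure IsCotangentBasis (I : Ideal R) (x : κ → R) : Prop where
  mem : ∀ k, x k ∈ I
  exists_sub_mem_sq : ∀ t ∈ I, ∃ g : κ → R, t - g ⬝ᵥ x ∈ I ^ 2
  mem_of_dotProduct_mem_sq : ∀ g : κ → R, g ⬝ᵥ x ∈ I ^ 2 → ∀ k, g k ∈ I

variable {I : Ideal R} {x : κ → R}

lemma dotProduct_mem (hx : ∀ k, x k ∈ I) (g : κ → R) : g ⬝ᵥ x ∈ I :=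
  Ideal.sum_mem _ fun k _ => I.mul_mem_left _ (hx k)

lemma toCotangent_dotProduct (hx : ∀ k, x k ∈ I) (g : κ → R) :
    I.toCotangent ⟨g ⬝ᵥ x, dotProduct_mem hx g⟩ =
      ∑ k, Ideal.Quotient.mk I (g k) • I.toCotangent ⟨x k, hx k⟩ := by
  have : (⟨g ⬝ᵥ x, dotProduct_mem hx g⟩ : I) = ∑ k, g k • ⟨x k, hx k⟩ := by
    ext; simp [dotProduct]
  rw [this, map_sum]
  rfl

lemma IsCotangentBasis.of_basis (e : Module.Basis κ (R ⧸ I) I.Cotangent) (hx : ∀ k, x k ∈ I)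
    (he : ∀ k, I.toCotangent ⟨x k, hx k⟩ = e k) : I.IsCotangentBasis x where
  mem := hx
  exists_sub_mem_sq t ht := by
    choose g hg using fun k => Ideal.Quotient.mk_surjective (e.repr (I.toCotangent ⟨t, ht⟩) k)
    refine ⟨g, (I.toCotangent_eq (x := ⟨t, ht⟩) (y := ⟨_, dotProduct_mem hx g⟩)).1 ?_⟩
    rw [toCotangent_dotProduct hx, ← e.sum_repr (I.toCotangent ⟨t, ht⟩)]
    simp [hg, he]
  mem_of_dotProduct_mem_sq g hg k := by
    have h := (I.toCotangent_eq_zero ⟨_, dotProduct_mem hx g⟩).2 hg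
    rw [toCotangent_dotProduct hx] at h
    simp_rw [he] at h
    exact Ideal.Quotient.eq_zero_iff_mem.1
      (Fintype.linearIndependent_iff.1 e.linearIndependent _ h k)

lemma IsCotangentBasis.free (hx : I.IsCotangentBasis x) : Module.Free (R ⧸ I) I.Cotangent := by
  set w : κ → I.Cotangent := fun k => I.toCotangent ⟨x k, hx.mem k⟩
  have hli : LinearIndependent (R ⧸ I) w := by
    refine Fintype.linearIndependent_iff.2 fun g hg k => ?_
    choose g' hg' using fun k => Ideal.Quotient.mk_surjective (g k)
    have hsq : g' ⬝ᵥ x ∈ I ^ 2 := by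
      rw [← I.toCotangent_eq_zero ⟨_, dotProduct_mem hx.mem g'⟩, toCotangent_dotProduct hx.mem]
      simpa [hg'] using hg
    rw [← hg' k]
    exact Ideal.Quotient.eq_zero_iff_mem.2 (hx.mem_of_dotProduct_mem_sq g' hsq k)
  have hsp : ⊤ ≤ Submodule.span (R ⧸ I) (Set.range w) := by
    rintro v -
    obtain ⟨⟨t, ht⟩, rfl⟩ := I.toCotangent_surjective v
    obtain ⟨g, hg⟩ := hx.exists_sub_mem_sq t ht
    rw [(I.toCotangent_eq (x := ⟨t, ht⟩) (y := ⟨_, dotProduct_mem hx.mem g⟩)).2 hg,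
      toCotangent_dotProduct hx.mem]
    exact Submodule.sum_mem _ fun k _ => Submodule.smul_mem _ _ (Submodule.subset_span ⟨k, rfl⟩)
  exact .of_basis (Module.Basis.mk hli hsp)

lemma IsCotangentBasis.update [DecidableEq κ] (hx : I.IsCotangentBasis x) {f : R} (hf : f ∈ I)
    {u : κ → R} {k₀ : κ} (hu : IsUnit (u k₀)) (hfu : f - u ⬝ᵥ x ∈ I ^ 2) :
    I.IsCotangentBasis (Function.update x k₀ f) where
  mem k := by
    rcases eq_or_ne k k₀ with rfl | hk
    · simpa using hf
    · simpa [hk] using hx.mem k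
  exists_sub_mem_sq t ht := by
    obtain ⟨g, hg⟩ := hx.exists_sub_mem_sq t ht
    obtain ⟨v, hv⟩ := hu.exists_right_inv
    set l := g k₀ * v
    refine ⟨g - l • u + Pi.single k₀ l, ?_⟩
    have hl : g k₀ - l * u k₀ = 0 := by rw [mul_comm (u k₀)] at hv; linear_combination -g k₀ * hv
    have : t - (g - l • u + Pi.single k₀ l) ⬝ᵥ Function.update x k₀ f =
        (t - g ⬝ᵥ x) - l * (f - u ⬝ᵥ x) := by
      rw [dotProduct_update]
      simp only [add_dotProduct, sub_dotProduct, smul_dotProduct, single_dotProduct, Pi.add_apply,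
        Pi.sub_apply, Pi.smul_apply, Pi.single_eq_same, smul_eq_mul]
      linear_combination -(f - x k₀) * hl
    rw [this]
    exact sub_mem hg ((I ^ 2).mul_mem_left l hfu)
  mem_of_dotProduct_mem_sq g hg := by
    set h := g + g k₀ • (u - Pi.single k₀ 1)
    have hh : h ⬝ᵥ x ∈ I ^ 2 := by
      have : h ⬝ᵥ x = g ⬝ᵥ Function.update x k₀ f - g k₀ * (f - u ⬝ᵥ x) := by
        simp only [h, dotProduct_update, add_dotProduct, smul_dotProduct, sub_dotProduct,
          single_dotProduct, smul_eq_mul]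
        ring
      rw [this]
      exact sub_mem hg ((I ^ 2).mul_mem_left _ hfu)
    have hk₀ : g k₀ ∈ I := by
      have : h k₀ = g k₀ * u k₀ := by simp [h]; ring
      have := hx.mem_of_dotProduct_mem_sq h hh k₀
      obtain ⟨v, hv⟩ := hu.exists_right_inv
      simpa [mul_assoc, hv, *] using I.mul_mem_right v this
    intro k
    have : g k = h k - g k₀ * (u k - (Pi.single k₀ 1 : κ → R) k) := by simp [h]
    rw [this]
    exact sub_mem (hx.mem_of_dotProduct_mem_sq h hh k) (I.mul_mem_right _ hk₀)

lemma IsCotangentBasis.exists_update [IsLocalRing R] [DecidableEq κ] (hx : I.IsCotangentBasis x)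
    (hI : I ≠ ⊤) {f : R} (hf : f ∈ I) (hfm : f ∉ maximalIdeal R * I) :
    ∃ k₀, I.IsCotangentBasis (Function.update x k₀ f) := by
  obtain ⟨u, hu⟩ := hx.exists_sub_mem_sq f hf
  suffices ∃ k₀, IsUnit (u k₀) from
    this.imp fun k₀ hk₀ => hx.update hf hk₀ hu
  by_contra! hnu
  have hux : u ⬝ᵥ x ∈ maximalIdeal R * I := Ideal.sum_mem _ fun k _ =>
    mul_mem_mul ((mem_maximalIdeal _).2 (hnu k)) (hx.mem k)
  have hsq : I ^ 2 ≤ maximalIdeal R * I := by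
    rw [pow_two]; exact mul_mono_left (le_maximalIdeal hI)
  exact hfm (by simpa using add_mem hux (hsq hu))

lemma exists_isCotangentBasis [IsNoetherianRing R] [IsLocalRing R] (hI : I ≠ ⊤)
    [Module.Free (R ⧸ I) I.Cotangent] : ∃ (n : ℕ) (x : Fin n → R), I.IsCotangentBasis x := by
  have : Nontrivial (R ⧸ I) := Ideal.Quotient.nontrivial_iff.2 hI
  have : Module.Finite R I.Cotangent := .of_surjective I.toCotangent I.toCotangent_surjective
  have : Module.Finite (R ⧸ I) I.Cotangent := Module.Finite.of_restrictScalars_finite R _ _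
  let e := Module.finBasis (R ⧸ I) I.Cotangent
  choose x hx using fun k => I.toCotangent_surjective (e k)
  exact ⟨_, _, .of_basis e (fun k => (x k).2) hx⟩

lemma sq_span_singleton_sup {b c : R} (hsq : I * I ≤ span {b * c} * I) :
    (span {b} ⊔ I) ^ 2 = span {b} * (span {b} ⊔ I) := by
  refine le_antisymm ?_ (pow_two (span {b} ⊔ I) ▸ mul_mono_left le_sup_left)
  have hbc : span {b * c} * I ≤ span {b} * (span {b} ⊔ I) :=
    mul_mono (span_singleton_le_span_singleton.2 (dvd_mul_right b c)) le_sup_right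
  rw [pow_two, sup_mul]
  refine sup_le le_rfl ?_
  rw [mul_sup, mul_comm I (span {b})]
  exact sup_le (mul_mono_right le_sup_right) (hsq.trans hbc)

section SpanSingletonSup

variable {b c : R} {k₀ : κ} (hx : I.IsCotangentBasis x) (hk₀ : x k₀ = b * c)
include hx hk₀

/-- Comparing `f`-coordinates in `b • [ct] = t • [f]` inside `I / I²`, where `f = bc`. -/
lemma IsCotangentBasis.mem_span_singleton_sup_of_mul_mem [DecidableEq κ] {t : R}
    (ht : c * t ∈ I) : t ∈ span {b} ⊔ I := by
  obtain ⟨g, hg⟩ := hx.exists_sub_mem_sq _ ht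
  have hrel : (b • g - Pi.single k₀ t) ⬝ᵥ x ∈ I ^ 2 := by
    have : (b • g - Pi.single k₀ t) ⬝ᵥ x = -(b * (c * t - g ⬝ᵥ x)) := by
      rw [sub_dotProduct, smul_dotProduct, single_dotProduct, hk₀, smul_eq_mul]; ring
    rw [this]
    exact neg_mem ((I ^ 2).mul_mem_left b hg)
  have := hx.mem_of_dotProduct_mem_sq _ hrel k₀
  simp only [Pi.sub_apply, Pi.smul_apply, Pi.single_eq_same, smul_eq_mul] at this
  exact mem_span_singleton_sup.2 ⟨g k₀, -(b * g k₀ - t), neg_mem this, by ring⟩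

lemma IsCotangentBasis.sup [DecidableEq κ] (hsq : I * I ≤ span {b * c} * I) :
    (span {b} ⊔ I).IsCotangentBasis (Function.update x k₀ b) where
  mem k := by
    rcases eq_or_ne k k₀ with rfl | hk
    · simpa using mem_sup_left (mem_span_singleton_self b)
    · simpa [hk] using mem_sup_right (hx.mem k)
  exists_sub_mem_sq t ht := by
    obtain ⟨p, s, hs, rfl⟩ := mem_span_singleton_sup.1 ht
    obtain ⟨g, hg⟩ := hx.exists_sub_mem_sq s hs
    refine ⟨g + Pi.single k₀ (p + g k₀ * c - g k₀), ?_⟩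
    have : p * b + s - (g + Pi.single k₀ (p + g k₀ * c - g k₀)) ⬝ᵥ Function.update x k₀ b =
        s - g ⬝ᵥ x := by
      simp only [dotProduct_update, add_dotProduct, single_dotProduct, Pi.add_apply,
        Pi.single_eq_same, hk₀]
      ring
    rw [this]
    exact Ideal.pow_right_mono le_sup_right 2 hg
  mem_of_dotProduct_mem_sq g hg := by
    rw [sq_span_singleton_sup hsq] at hg
    obtain ⟨j, hj, hgj⟩ := mem_span_singleton_mul.1 hg
    obtain ⟨p, q, hq, rfl⟩ := mem_span_singleton_sup.1 hj
    set h := c • g + Pi.single k₀ (g k₀ - p * b - q - c * g k₀)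
    have hh : h ⬝ᵥ x = 0 := by
      rw [dotProduct_update, hk₀] at hgj
      simp only [h, add_dotProduct, smul_dotProduct, single_dotProduct, hk₀, smul_eq_mul]
      linear_combination -c * hgj
    have hI := hx.mem_of_dotProduct_mem_sq h (hh ▸ zero_mem _)
    intro k
    rcases eq_or_ne k k₀ with rfl | hk
    · have : g k = h k + p * b + q := by simp [h]; ring
      rw [this]
      exact add_mem (add_mem (mem_sup_right (hI k))
        (mem_sup_left (mul_mem_left _ _ (mem_span_singleton_self b)))) (mem_sup_right hq)
    · exact hx.mem_span_singleton_sup_of_mul_mem hk₀ (by simpa [h, hk] using hI k)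

lemma IsCotangentBasis.span_singleton_ne_sup (hc : c ∉ I) (hIf : I ≠ span {b * c})
    (hsq : I * I ≤ span {b * c} * I) : span {b} ≠ span {b} ⊔ I := by
  classical
  intro h
  have hIb : I ≤ span {b} := h ▸ le_sup_right
  by_cases hκ : ∃ k, k ≠ k₀
  · obtain ⟨k, hk⟩ := hκ
    obtain ⟨y, hy⟩ := mem_span_singleton'.1 (hIb (hx.mem k))
    have hrel : (Pi.single k c - Pi.single k₀ y) ⬝ᵥ x = 0 := by
      rw [sub_dotProduct, single_dotProduct, single_dotProduct, hk₀, ← hy]; ring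
    have := hx.mem_of_dotProduct_mem_sq _ (hrel ▸ zero_mem _) k
    exact hc (by simpa [hk] using this)
  · push Not at hκ
    refine hIf (le_antisymm (fun t ht => ?_) (span_singleton_le_iff_mem _ |>.2 (hk₀ ▸ hx.mem k₀)))
    obtain ⟨g, hg⟩ := hx.exists_sub_mem_sq t ht
    have hgx : g ⬝ᵥ x = g k₀ * (b * c) := by
      rw [dotProduct, Fintype.sum_eq_single k₀ fun k hk => absurd (hκ k) hk, hk₀]
    have hsq' : I ^ 2 ≤ span {b * c} := (pow_two I ▸ hsq).trans Ideal.mul_le_left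
    simpa [hgx] using add_mem (hsq' hg) (mul_mem_left _ (g k₀) (mem_span_singleton_self (b * c)))

end SpanSingletonSup

lemma span_singleton_mul_sup_lt {x a : R} (hx : x ∉ I) (ha : a ∈ (⊥ : Ideal R).jacobson) :
    span {x * a} ⊔ I < span {x} ⊔ I := by
  refine lt_of_le_of_ne
    (sup_le_sup_right (span_singleton_le_span_singleton.2 (dvd_mul_right x a)) I) fun h => hx ?_
  obtain ⟨r, s, hs, hrs⟩ := mem_span_singleton_sup.1 (h ▸ mem_sup_left (mem_span_singleton_self x))
  obtain ⟨u, hu⟩ := (mem_jacobson_bot.1 ha (-r)).exists_left_inv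
  have : x = u * s := by linear_combination (-x) * hu - u * hrs
  exact this ▸ I.mul_mem_left u hs

lemma span_singleton_eq_of_sq_eq_mul {a f : R} (hf : f ∈ nonZeroDivisors R) (ha : a ∈ span {f})
    (hsq : span {f} ^ 2 = span {a} * span {f}) : span {a} = span {f} := by
  refine le_antisymm ((span_singleton_le_iff_mem _).2 ha) ((span_singleton_le_iff_mem _).2 ?_)
  have : f * f ∈ span {a} * span {f} := hsq ▸ pow_two (span {f}) ▸ mul_mem_mul
    (mem_span_singleton_self f) (mem_span_singleton_self f)
  obtain ⟨w, hw, hfw⟩ := mem_span_singleton_mul.1 this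
  obtain ⟨s, rfl⟩ := mem_span_singleton'.1 hw
  have : a * s = f := (mul_cancel_right_mem_nonZeroDivisors hf).1 (by rw [← hfw]; ring)
  exact this ▸ mul_mem_right s _ (mem_span_singleton_self a)

end Ideal

theorem isUlrich_span_singleton_sup {R : Type*} [CommRing R] [IsLocalRing R] [IsNoetherianRing R]
    {I : Ideal R} (hI : IsUlrich R I) {b c f : R} (hbc : b * c = f) (hb : b ∈ maximalIdeal R)
    (hc : c ∉ I) (hf : f ∈ I) (hfm : f ∉ maximalIdeal R * I) (hsq : I * I ≤ span {f} * I)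
    (hIf : I ≠ span {f}) :
    IsUlrich R (span {b} ⊔ I) := by
  classical
  subst hbc
  obtain ⟨hrad, hItop, -, -, -, -, hfree⟩ := hI
  obtain ⟨n, x, hx⟩ := exists_isCotangentBasis hItop
  obtain ⟨k₀, hx'⟩ := hx.exists_update hItop hf hfm
  have hk₀ : Function.update x k₀ (b * c) k₀ = b * c := Function.update_self ..
  have hJm : span {b} ⊔ I ≤ maximalIdeal R :=
    sup_le ((span_singleton_le_iff_mem _).2 hb) (le_maximalIdeal hItop)
  refine ⟨le_antisymm ?_ (hrad ▸ radical_mono le_sup_right), ne_top_of_le_ne_top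
    (maximalIdeal.isMaximal R).ne_top hJm, b, mem_sup_left (mem_span_singleton_self b),
    hx'.span_singleton_ne_sup hk₀ hc hIf hsq, sq_span_singleton_sup hsq, (hx'.sup hk₀ hsq).free⟩
  rw [jacobson_eq_maximalIdeal ⊥ bot_ne_top]
  exact (radical_mono hJm).trans_eq (maximalIdeal.isMaximal R).isPrime.radical

section Colon

variable {R : Type*} [CommRing R] {K : Type*} [CommRing K] [Algebra R K] {I : Ideal R}

lemma one_mem_qcolon_self (X : Submodule R K) : (1 : K) ∈ qcolon R K X X :=
  fun y hy => by simpa using hy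

lemma algebraMap_mem_toK_iff [IsFractionRing R K] {r : R} :
    algebraMap R K r ∈ toK R K I ↔ r ∈ I :=
  ⟨fun ⟨_, hs, h⟩ => IsFractionRing.injective R K h ▸ hs, fun h => ⟨r, h, rfl⟩⟩

lemma algebraMap_mul_mem_toK_mul {z : K} (hz : z ∈ qcolon R K (toK R K I) (toK R K I))
    {J : Ideal R} {y : R} (hy : y ∈ J * I) : algebraMap R K y * z ∈ toK R K (J * I) := by
  refine Submodule.mul_induction_on hy (fun j hj i hi => ?_) fun y y' hy hy' => ?_
  · obtain ⟨w, hw, hzw⟩ := hz _ ⟨i, hi, rfl⟩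
    refine ⟨j * w, mul_mem_mul hj hw, ?_⟩
    simp only [Algebra.linearMap_apply, map_mul] at hzw ⊢
    rw [hzw]; ring
  · simpa [add_mul] using add_mem hy hy'

variable [IsFractionRing R K] {f : R}
  (hprod : toK R K I = f • qcolon R K (toK R K I) (toK R K I))
include hprod

lemma exists_mul_eq_of_toK_eq_smul {r : R} (hr : r ∈ I) :
    ∃ z ∈ qcolon R K (toK R K I) (toK R K I), algebraMap R K f * z = algebraMap R K r := by
  have : algebraMap R K r ∈ f • qcolon R K (toK R K I) (toK R K I) :=
    hprod ▸ algebraMap_mem_toK_iff.2 hr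
  simpa [Submodule.mem_smul_pointwise_iff_exists, Algebra.smul_def] using this

lemma mem_of_toK_eq_smul : f ∈ I := by
  refine algebraMap_mem_toK_iff.1 (hprod ▸ (Submodule.mem_smul_pointwise_iff_exists _ _ _).2
    ⟨1, one_mem_qcolon_self _, ?_⟩)
  simp [Algebra.smul_def]

lemma mul_le_span_singleton_mul_of_toK_eq_smul : I * I ≤ span {f} * I := by
  refine mul_le.2 fun p hp q hq => ?_
  obtain ⟨z, hz, hzq⟩ := exists_mul_eq_of_toK_eq_smul hprod hq
  obtain ⟨w, hw, hzw⟩ := hz _ (algebraMap_mem_toK_iff.2 hp)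
  refine mem_span_singleton_mul.2 ⟨w, hw, IsFractionRing.injective R K ?_⟩
  simp only [Algebra.linearMap_apply] at hzw
  rw [map_mul, map_mul, hzw, ← hzq]; ring

lemma le_mul_of_mem_mul_of_toK_eq_smul {J : Ideal R} (hf : f ∈ J * I) : I ≤ J * I := fun p hp => by
  obtain ⟨z, hz, hzp⟩ := exists_mul_eq_of_toK_eq_smul hprod hp
  exact algebraMap_mem_toK_iff.1 (hzp ▸ algebraMap_mul_mem_toK_mul hz hf)

lemma notMem_mul_of_toK_eq_smul [IsNoetherianRing R] (hI : I ≠ ⊥) {J : Ideal R}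
    (hJ : J ≤ (⊥ : Ideal R).jacobson) : f ∉ J * I := fun hf =>
  hI (Submodule.eq_bot_of_le_smul_of_le_jacobson_bot J I (IsNoetherian.noetherian I)
    (le_mul_of_mem_mul_of_toK_eq_smul hprod hf) hJ)

lemma mem_nonZeroDivisors_of_toK_eq_smul {d : R} (hdI : d ∈ I) (hd : d ∈ nonZeroDivisors R) :
    f ∈ nonZeroDivisors R := by
  obtain ⟨z, -, hzd⟩ := exists_mul_eq_of_toK_eq_smul hprod hdI
  refine mem_nonZeroDivisors_iff_right.2 fun y hy => mem_nonZeroDivisors_iff_right.1 hd y ?_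
  apply IsFractionRing.injective R K
  rw [map_mul, ← hzd, ← mul_assoc, ← map_mul, hy, map_zero, zero_mul]

end Colon

lemma IsOneDimCMLocal.exists_mem_nonZeroDivisors {R : Type*} [CommRing R] [IsOneDimCMLocal R]
    {I : Ideal R} (hI : I.radical = (⊥ : Ideal R).jacobson) : ∃ d ∈ I, d ∈ nonZeroDivisors R := by
  obtain ⟨a, ha, ha0⟩ := IsOneDimCMLocal.depth_pos (R := R)
  obtain ⟨k, hk⟩ := hI.ge ha
  exact ⟨a ^ k, hk, pow_mem ha0 k⟩

lemma Finset.prod_Icc_one_mul_prod_Ioc {M : Type*} [CommMonoid M] (a : ℕ → M) {i n : ℕ}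
    (hin : i ≤ n) : (∏ j ∈ Finset.Icc 1 i, a j) * ∏ j ∈ Finset.Ioc i n, a j =
      ∏ j ∈ Finset.Icc 1 n, a j := by
  have hIcc (k : ℕ) : Finset.Icc 1 k = Finset.Ioc 0 k := Finset.Icc_add_one_left_eq_Ioc 0 k
  rw [hIcc, hIcc, Finset.prod_Ioc_consecutive a (Nat.zero_le i) hin]

theorem stmt13_general (R : Type*) [CommRing R] [IsOneDimCMLocal R]
    (K : Type*) [CommRing K] [Algebra R K] [IsFractionRing R K]
    (I : Ideal R) (hI : IsUlrich R I)
    (n : ℕ) (a : ℕ → R)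
    (ha : ∀ i, 1 ≤ i → i ≤ n → a i ∈ (⊥ : Ideal R).jacobson)
    (hprod : toK R K I =
      (∏ j ∈ Finset.Icc 1 n, a j) • qcolon R K (toK R K I) (toK R K I)) :
    (∀ i, 1 ≤ i → i ≤ n →
      IsUlrich R (Ideal.span {∏ j ∈ Finset.Icc 1 i, a j} ⊔ I)) ∧
    (Ideal.span {∏ j ∈ Finset.Icc 1 n, a j} ⊔ I) = I ∧
    (∀ i, 1 ≤ i → i < n →
      (Ideal.span {∏ j ∈ Finset.Icc 1 (i + 1), a j} ⊔ I) <
        (Ideal.span {∏ j ∈ Finset.Icc 1 i, a j} ⊔ I)) := by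
  have := IsOneDimCMLocal.local_ (R := R)
  have := IsOneDimCMLocal.noeth (R := R)
  have hm := jacobson_eq_maximalIdeal (⊥ : Ideal R) bot_ne_top
  set f := ∏ j ∈ Finset.Icc 1 n, a j
  obtain ⟨d, hdI, hd⟩ := IsOneDimCMLocal.exists_mem_nonZeroDivisors hI.1
  have hI0 : I ≠ ⊥ := fun h => nonZeroDivisors.ne_zero hd (by simpa [h] using hdI)
  have hfI : f ∈ I := mem_of_toK_eq_smul hprod
  have hIf : I ≠ span {f} := by
    rintro rfl
    obtain ⟨-, -, a₀, ha₀, hne, hsq, -⟩ := hI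
    exact hne (span_singleton_eq_of_sq_eq_mul (mem_nonZeroDivisors_of_toK_eq_smul hprod hdI hd)
      ha₀ hsq)
  have hfactor : ∀ b c, b * c = f → b ∈ (⊥ : Ideal R).jacobson → c ∉ I := fun b c hbc hb hc =>
    notMem_mul_of_toK_eq_smul hprod hI0 ((span_singleton_le_iff_mem _).2 hb)
      (hbc ▸ mul_mem_mul (mem_span_singleton_self b) hc)
  refine ⟨fun i hi hin => ?_, sup_eq_right.2 ((span_singleton_le_iff_mem _).2 hfI),
    fun i hi hin => ?_⟩
  · have hsplit := Finset.prod_Icc_one_mul_prod_Ioc a hin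
    have hb := Ideal.prod_mem _ (Finset.left_mem_Icc.2 hi) (ha 1 le_rfl (hi.trans hin))
    exact isUlrich_span_singleton_sup hI hsplit (hm ▸ hb) (hfactor _ _ hsplit hb) hfI
      (notMem_mul_of_toK_eq_smul hprod hI0 hm.ge) (mul_le_span_singleton_mul_of_toK_eq_smul hprod)
      hIf
  · have hc := Ideal.prod_mem _ (Finset.mem_Ioc.2 ⟨i.lt_succ_self, hin⟩) (ha _ (by omega) hin)
    rw [Finset.prod_Icc_succ_top (by omega)]
    refine span_singleton_mul_sup_lt (hfactor _ _ ?_ hc) (ha _ (by omega) hin)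
    rw [mul_comm, Finset.prod_Icc_one_mul_prod_Ioc a hin.le]

theorem stmt13 (R : Type*) [CommRing R] [IsOneDimCMLocal R]
    (K : Type*) [CommRing K] [Algebra R K] [IsFractionRing R K]
    (I : Ideal R) (hI : IsUlrich R I)
    (n : ℕ) (hn : 2 ≤ n) (a : ℕ → R)
    (ha : ∀ i, 1 ≤ i → i ≤ n → a i ∈ (⊥ : Ideal R).jacobson)
    (hprod : toK R K I =
      (∏ j ∈ Finset.Icc 1 n, a j) • qcolon R K (toK R K I) (toK R K I)) :
    (∀ i, 1 ≤ i → i ≤ n →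
      IsUlrich R (Ideal.span {∏ j ∈ Finset.Icc 1 i, a j} ⊔ I)) ∧
    (Ideal.span {∏ j ∈ Finset.Icc 1 n, a j} ⊔ I) = I ∧
    (∀ i, 1 ≤ i → i < n →
      (Ideal.span {∏ j ∈ Finset.Icc 1 (i + 1), a j} ⊔ I) <
        (Ideal.span {∏ j ∈ Finset.Icc 1 i, a j} ⊔ I)) :=
  stmt13_general R K I hI n a ha hprod
end

section
/- Let I ⊊ J be Ulrich ideals of R and α ∈ J. Then J = (α) + I if and only if J² = αJ. -/
set_option synthInstance.maxHeartbeats 1000000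
set_option maxHeartbeats 2000000
set_option linter.unnecessarySimpa false

open IsLocalRing Pointwise

/-!
Let `(a)` and `(q)` be the minimal reductions of `I` and `J`. Since `I² = aI` with `a` regular,
Nakayama shows that the image of `a` in the free `R/I`-module `I/I²` has a unit coordinate. When
`I ≠ (a)` there is a second basis vector, and comparing coordinates gives `(a) : I = I`; hence
`IJ ⊆ πI` and, reading `ax ∈ πI` in `I/I²`, `J ⊆ (π) + I` for every regular `π` with
`J² = πJ`. This is the backward direction, as `J² = αJ` forces `α` to be regular.

Conversely, if `J = (α) + I` write `q = rα + x` with `x ∈ I`. Then `q ∉ I`, so `xI ⊆ q𝔪I`, and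
Nakayama turns `qI ⊆ αI + 𝔪qI` into `qI ⊆ αI`. Thus `J² = αJ + IJ ⊆ αJ + qI ⊆ αJ`.
-/

open scoped nonZeroDivisors

namespace Ideal

variable {R : Type*} [CommRing R]

theorem mem_nonZeroDivisors_of_sq_le_span_singleton {W : Ideal R} {z π : R} (hz : z ∈ R⁰)
    (hzW : z ∈ W.radical) (hW : W ^ 2 ≤ span {π}) : π ∈ R⁰ := by
  obtain ⟨n, hn⟩ := hzW
  obtain ⟨c, hc⟩ := mem_span_singleton'.mp (hW (pow_two W ▸ mul_mem_mul hn hn))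
  have : c * π ∈ R⁰ := hc ▸ mul_mem (pow_mem hz n) (pow_mem hz n)
  exact (mul_mem_nonZeroDivisors.mp this).2

theorem mk_smul_toCotangent (I : Ideal R) (r : R) (x : I) :
    Quotient.mk I r • I.toCotangent x = I.toCotangent (r • x) :=
  (map_smul I.toCotangent r x).symm

section IsLocalRing

variable [IsLocalRing R] {I : Ideal R} {ι : Type*}

theorem mem_maximalIdeal_mul_of_forall_not_isUnit_repr (hI : I ≠ ⊤)
    (b : Module.Basis ι (R ⧸ I) I.Cotangent) (x : I)
    (hx : ∀ k, ¬IsUnit (b.repr (I.toCotangent x) k)) : (x : R) ∈ maximalIdeal R * I := by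
  have hmem : I.toCotangent x ∈ maximalIdeal R • (⊤ : Submodule R I.Cotangent) := by
    rw [← b.linearCombination_repr (I.toCotangent x), Finsupp.linearCombination_apply]
    refine Submodule.sum_mem _ fun k _ => ?_
    obtain ⟨r, hr⟩ := Quotient.mk_surjective (b.repr (I.toCotangent x) k)
    have hrm : r ∈ maximalIdeal R := fun hr' => hx k (hr ▸ hr'.map _)
    rw [← hr]
    exact Submodule.smul_mem_smul hrm trivial
  rw [← I.toCotangent_range, ← Submodule.map_top, ← Submodule.map_smul''] at hmem
  obtain ⟨y, hy, hyx⟩ := hmem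
  have hxy : (x - y : R) ∈ I ^ 2 := (I.toCotangent_eq).mp hyx.symm
  have hsq : I ^ 2 ≤ maximalIdeal R * I := pow_two I ▸ mul_mono_left (le_maximalIdeal hI)
  rw [SetLike.mem_coe, Submodule.mem_smul_top_iff, smul_eq_mul] at hy
  simpa using add_mem hy (hsq hxy)

theorem exists_isUnit_repr_toCotangent [IsNoetherianRing R] (hI : I ≠ ⊤)
    (b : Module.Basis ι (R ⧸ I) I.Cotangent) {a : R} (ha : a ∈ I) (ha0 : a ∈ R⁰)
    (hsq : I ^ 2 = span {a} * I) : ∃ k, IsUnit (b.repr (I.toCotangent ⟨a, ha⟩) k) := by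
  by_contra! h
  have ham := mem_maximalIdeal_mul_of_forall_not_isUnit_repr hI b ⟨a, ha⟩ h
  -- `a ∈ 𝔪I` forces `I² = aI ⊆ 𝔪I²`, so `I² = 0` by Nakayama.
  have hle : I ^ 2 ≤ maximalIdeal R • I ^ 2 := by
    rw [smul_eq_mul, pow_two, ← mul_assoc, ← pow_two, hsq]
    exact mul_mono_left (span_le.mpr (Set.singleton_subset_iff.mpr ham))
  have hbot := Submodule.eq_bot_of_le_smul_of_le_jacobson_bot _ _ (IsNoetherian.noetherian _)
    hle (maximalIdeal_le_jacobson _)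
  have haa : a * a = 0 := by
    simpa [hbot] using (pow_two I ▸ mul_mem_mul ha ha : a * a ∈ I ^ 2)
  exact zero_notMem_nonZeroDivisors (mem_nonZeroDivisors_iff_right.mp ha0 a haa ▸ ha0)

theorem mem_maximalIdeal_mul_of_mul_mem_sq [Module.Free (R ⧸ I) I.Cotangent] (hI : I ≠ ⊤)
    {c : R} (hc : c ∉ I) (x : I) (hcx : c * x ∈ I ^ 2) : (x : R) ∈ maximalIdeal R * I := by
  refine mem_maximalIdeal_mul_of_forall_not_isUnit_repr hI
    (Module.Free.chooseBasis (R ⧸ I) I.Cotangent) x fun k hk => hc ?_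
  have h0 : Quotient.mk I c • I.toCotangent x = 0 := by
    rw [mk_smul_toCotangent, toCotangent_eq_zero]
    exact hcx
  have := congrArg (fun w => (Module.Free.chooseBasis (R ⧸ I) I.Cotangent).repr w k) h0
  simp only [map_smul, Finsupp.smul_apply, smul_eq_mul, map_zero, Finsupp.coe_zero,
    Pi.zero_apply] at this
  exact Quotient.eq_zero_iff_mem.mp (hk.mul_left_eq_zero.mp this)

end IsLocalRing

end Ideal

structure Ideal.IsUlrichReduction {R : Type*} [CommRing R] (I : Ideal R) (a : R) : Prop where
  ne_top : I ≠ ⊤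
  mem : a ∈ I
  mem_nonZeroDivisors : a ∈ R⁰
  span_singleton_ne : Ideal.span {a} ≠ I
  sq_eq : I ^ 2 = Ideal.span {a} * I
  free : Module.Free (R ⧸ I) I.Cotangent

namespace Ideal.IsUlrichReduction

variable {R : Type*} [CommRing R] [IsLocalRing R] [IsNoetherianRing R] {I J : Ideal R} {a : R}

theorem mem_of_forall_mul_mem_span_singleton (h : I.IsUlrichReduction a) {y : R}
    (hy : ∀ i ∈ I, y * i ∈ span {a}) : y ∈ I := by
  have := h.free
  set b := Module.Free.chooseBasis (R ⧸ I) I.Cotangent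
  obtain ⟨k₀, hk₀⟩ :=
    exists_isUnit_repr_toCotangent h.ne_top b h.mem h.mem_nonZeroDivisors h.sq_eq
  by_cases hk : ∃ k, k ≠ k₀
  · obtain ⟨k, hk⟩ := hk
    obtain ⟨i, hi⟩ := I.toCotangent_surjective (b k)
    obtain ⟨c, hc⟩ := mem_span_singleton'.mp (hy i i.2)
    have key : Quotient.mk I y • b k = Quotient.mk I c • I.toCotangent ⟨a, h.mem⟩ := by
      rw [← hi, mk_smul_toCotangent, mk_smul_toCotangent]
      congr 1
      ext
      exact hc.symm
    have h₀ := congrArg (fun w => b.repr w k₀) key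
    have h₁ := congrArg (fun w => b.repr w k) key
    simp only [map_smul, Finsupp.smul_apply, Module.Basis.repr_self, smul_eq_mul,
      Finsupp.single_apply, if_neg hk, if_true, mul_zero, mul_one] at h₀ h₁
    rw [← Quotient.eq_zero_iff_mem, h₁, hk₀.mul_left_eq_zero.mp h₀.symm, zero_mul]
  · -- `I/I²` is then cyclic, generated by the image of `a`, so `I = (a) + I² = (a)`.
    push Not at hk
    refine absurd (le_antisymm (span_le.mpr (Set.singleton_subset_iff.mpr h.mem))
      fun x hx => ?_) h.span_singleton_ne
    obtain ⟨d, hd⟩ := Quotient.mk_surjective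
      (b.repr (I.toCotangent ⟨x, hx⟩) k₀ * ((hk₀.unit⁻¹ : (R ⧸ I)ˣ) : R ⧸ I))
    have hxd : I.toCotangent ⟨x, hx⟩ = I.toCotangent (d • ⟨a, h.mem⟩) := by
      rw [← mk_smul_toCotangent, hd]
      refine b.repr.injective (Finsupp.ext fun k => ?_)
      rw [hk k]
      simp only [map_smul, Finsupp.smul_apply, smul_eq_mul, mul_assoc, IsUnit.val_inv_mul,
        mul_one]
    have hsq : I ^ 2 ≤ span {a} := h.sq_eq ▸ Ideal.mul_le_left
    simpa using add_mem (hsq ((I.toCotangent_eq).mp hxd)) (mem_span_singleton'.mpr ⟨d, rfl⟩)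

theorem mul_le_span_singleton_mul (h : I.IsUlrichReduction a) (hIJ : I ≤ J) {π : R}
    (hπ : π ∈ R⁰) (hJ : J ^ 2 = span {π} * J) : I * J ≤ span {π} * I := by
  have hJJ : ∀ u ∈ J, ∀ v ∈ J, ∃ w ∈ J, π * w = u * v := fun u hu v hv =>
    mem_span_singleton_mul.mp (hJ ▸ pow_two J ▸ mul_mem_mul hu hv)
  refine mul_le.mpr fun i hi j hj => ?_
  obtain ⟨w, -, hw⟩ := hJJ j hj i (hIJ hi)
  refine mem_span_singleton_mul.mpr ⟨w, h.mem_of_forall_mul_mem_span_singleton fun i' hi' => ?_,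
    by rw [hw, mul_comm]⟩
  obtain ⟨d, hd, hda⟩ := mem_span_singleton_mul.mp (h.sq_eq ▸ pow_two I ▸ mul_mem_mul hi hi')
  obtain ⟨e, -, he⟩ := hJJ j hj d (hIJ hd)
  have : π * (w * i') = π * (a * e) := by linear_combination i' * hw - j * hda - a * he
  exact mem_span_singleton'.mpr
    ⟨e, by rw [mul_comm, (mul_cancel_left_mem_nonZeroDivisors hπ).mp this]⟩

theorem le_span_singleton_sup (h : I.IsUlrichReduction a) (hIJ : I ≤ J) {π : R}
    (hπ : π ∈ R⁰) (hJ : J ^ 2 = span {π} * J) : J ≤ span {π} ⊔ I := by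
  have := h.free
  set b := Module.Free.chooseBasis (R ⧸ I) I.Cotangent
  obtain ⟨k₀, hk₀⟩ :=
    exists_isUnit_repr_toCotangent h.ne_top b h.mem h.mem_nonZeroDivisors h.sq_eq
  intro x hx
  obtain ⟨z, hz, hzx⟩ := mem_span_singleton_mul.mp
    (h.mul_le_span_singleton_mul hIJ hπ hJ (mul_mem_mul h.mem hx))
  -- Read `π z = a x` in `I/I²` at a coordinate where the image of `a` is a unit.
  have key : Quotient.mk I π • I.toCotangent ⟨z, hz⟩ =
      Quotient.mk I x • I.toCotangent ⟨a, h.mem⟩ := by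
    rw [mk_smul_toCotangent, mk_smul_toCotangent]
    congr 1
    ext
    simpa [mul_comm x] using hzx
  have hk := congrArg (fun w => b.repr w k₀ * ((hk₀.unit⁻¹ : (R ⧸ I)ˣ) : R ⧸ I)) key
  simp only [map_smul, Finsupp.smul_apply, smul_eq_mul, mul_assoc, IsUnit.mul_val_inv,
    mul_one] at hk
  obtain ⟨d, hd⟩ := Quotient.mk_surjective
    (b.repr (I.toCotangent ⟨z, hz⟩) k₀ * ((hk₀.unit⁻¹ : (R ⧸ I)ˣ) : R ⧸ I))
  refine mem_span_singleton_sup.mpr ⟨d, x - d * π, ?_, by ring⟩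
  rw [← Quotient.eq_zero_iff_mem, map_sub, map_mul, hd, ← hk, mul_comm, sub_self]

theorem sq_eq_span_singleton_mul_of_eq_sup (h : I.IsUlrichReduction a) (hIJ : I < J) {q : R}
    (hq : q ∈ J) (hq0 : q ∈ R⁰) (hJ : J ^ 2 = span {q} * J) {α : R}
    (hJα : J = span {α} ⊔ I) : J ^ 2 = span {α} * J := by
  have := h.free
  have hqI : q ∉ I := fun hqI => hIJ.not_ge <| (h.le_span_singleton_sup hIJ.le hq0 hJ).trans
    (sup_le (span_le.mpr (Set.singleton_subset_iff.mpr hqI)) le_rfl)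
  obtain ⟨r, x, hx, hqrx⟩ := mem_span_singleton_sup.mp (hJα ▸ hq)
  have hIJq := h.mul_le_span_singleton_mul hIJ.le hq0 hJ
  -- `xi = qz` with `z ∈ 𝔪I`, because `q ∉ I` kills the class of `z` in the free module `I/I²`.
  have hqI_le : span {q} * I ≤ span {α} * I ⊔ maximalIdeal R • (span {q} * I) := by
    refine span_singleton_mul_le_iff.mpr fun i hi => ?_
    obtain ⟨z, hz, hzx⟩ := mem_span_singleton_mul.mp (hIJq (mul_mem_mul hx (hIJ.le hi)))
    have hzm : z ∈ maximalIdeal R * I :=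
      mem_maximalIdeal_mul_of_mul_mem_sq h.ne_top hqI ⟨z, hz⟩
        (hzx ▸ pow_two I ▸ mul_mem_mul hx hi)
    have hqi : q * i = r * (α * i) + q * z := by linear_combination (-i) * hqrx - hzx
    rw [hqi, smul_eq_mul, mul_left_comm]
    exact add_mem (mem_sup_left (mul_mem_left _ r (mul_mem_mul (mem_span_singleton_self α) hi)))
      (mem_sup_right (mul_mem_mul (mem_span_singleton_self q) hzm))
  have hqα : span {q} * I ≤ span {α} * I := Submodule.le_of_le_smul_of_le_jacobson_bot
    (IsNoetherian.noetherian _) (maximalIdeal_le_jacobson _) hqI_le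
  have hαJ : span {α} ≤ J := hJα ▸ le_sup_left
  refine le_antisymm ?_ ((mul_mono_left hαJ).trans (pow_two J).ge)
  calc J ^ 2 = span {α} * J ⊔ I * J := by rw [pow_two, ← sup_mul, ← hJα]
    _ ≤ span {α} * J := sup_le le_rfl (hIJq.trans (hqα.trans (mul_mono_right hIJ.le)))

end Ideal.IsUlrichReduction

theorem IsOneDimCMLocal.mem_nonZeroDivisors_of_sq_eq {R : Type*} [CommRing R]
    [IsOneDimCMLocal R] {W : Ideal R} (hW : W.radical = (⊥ : Ideal R).jacobson) {π : R}
    (hπ : W ^ 2 = Ideal.span {π} * W) : π ∈ R⁰ := by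
  obtain ⟨z, hzm, hz⟩ := IsOneDimCMLocal.depth_pos (R := R)
  exact Ideal.mem_nonZeroDivisors_of_sq_le_span_singleton hz (hW ▸ hzm)
    (hπ ▸ Ideal.mul_le_left)

theorem IsUlrich.exists_isUlrichReduction {R : Type*} [CommRing R] [IsOneDimCMLocal R]
    {I : Ideal R} (h : IsUlrich R I) : ∃ a, I.IsUlrichReduction a := by
  obtain ⟨hrad, hne, a, ha, hspan, hsq, hfree⟩ := h
  exact ⟨a, hne, ha, IsOneDimCMLocal.mem_nonZeroDivisors_of_sq_eq hrad hsq, hspan, hsq, hfree⟩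

theorem stmt16_general (R : Type*) [CommRing R] [IsOneDimCMLocal R]
    (I J : Ideal R) (hI : IsUlrich R I) (hJ : IsUlrich R J) (hIJ : I < J)
    (α : R) (hα : α ∈ J) :
    J = Ideal.span {α} ⊔ I ↔ J ^ 2 = Ideal.span {α} * J := by
  have : IsNoetherianRing R := IsOneDimCMLocal.noeth
  have : IsLocalRing R := IsOneDimCMLocal.local_
  obtain ⟨a, ha⟩ := hI.exists_isUlrichReduction
  obtain ⟨q, hq⟩ := hJ.exists_isUlrichReduction
  refine ⟨ha.sq_eq_span_singleton_mul_of_eq_sup hIJ hq.mem hq.mem_nonZeroDivisors hq.sq_eq,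
    fun hsq => le_antisymm ?_ (sup_le (Ideal.span_le.mpr (by simpa using hα)) hIJ.le)⟩
  have hα0 := IsOneDimCMLocal.mem_nonZeroDivisors_of_sq_eq hJ.1 hsq
  exact ha.le_span_singleton_sup hIJ.le hα0 hsq

theorem stmt16 (R : Type*) [CommRing R] [IsOneDimCMLocal R]
    (K : Type*) [CommRing K] [Algebra R K] [IsFractionRing R K]
    (I J : Ideal R) (hI : IsUlrich R I) (hJ : IsUlrich R J) (hIJ : I < J)
    (α : R) (hα : α ∈ J) :
    J = Ideal.span {α} ⊔ I ↔ J ^ 2 = Ideal.span {α} * J :=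
  stmt16_general R I J hI hJ hIJ α hα
end
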